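/- For every n ≥ 1, if β = γ_n is the unique real number greater than 1 with β^{g_n+1} = β + 1 (g_n = ⌊2^{n+1}/3⌋), then P_{φ^{n-1}(21)}(β) = P_{φ^{n-1}(2)}(β), where φ is the morphism φ(1)=2, φ(2)=211 and P_w(X) = (-X)^k + Σ_{i=1}^k a_i(-X)^{k-i} for w = a_1⋯a_k over {1,2}. -/

import Mathlib

/-- The morphism φ on the alphabet {1,2}: φ(1) = 2, φ(2) = 211. -/
def phi : ℕ → List ℕ
  | 1 => [2]
  | 2 => [2, 1, 1]
  | _ => []

/-- Extension of φ to words by concatenation. -/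
def phiW (w : List ℕ) : List ℕ := w.flatMap phi

/-- The polynomial P_{a₁⋯a_k}(X) = (-X)^k + Σ_{i=1}^k a_i (-X)^{k-i}, evaluated at x. -/
def P (w : List ℕ) (x : ℝ) : ℝ :=
  (-x) ^ w.length + ∑ i ∈ Finset.range w.length, (w.getD i 0 : ℝ) * (-x) ^ (w.length - 1 - i)

/-- g_n = ⌊2^(n+1)/3⌋. -/
def g (n : ℕ) : ℕ := 2 ^ (n + 1) / 3

/-!
Write `Bₙ = φⁿ(1)` (`block n`). Since `φ(2) = φ(1) 1 1`, these blocks satisfy `Bₙ₊₂ = Bₙ₊₁ Bₙ Bₙ`, so their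
lengths `ℓₙ` obey `ℓₙ₊₂ = ℓₙ₊₁ + 2ℓₙ`, i.e. `3ℓₙ = 2ⁿ⁺¹ ± 1`; in particular every `ℓₙ` is odd
and `2ℓₙ + [n odd] = g (n+1) + 1`. The concatenation rule
`P_{uv} = (-X)^|v| P_u + P_v - (-X)^|v|` then gives by induction
`P_{Bₙ} = 1 - X^[n even] ∏_{m<n} (X^{ℓₘ} - 1)`. Since `φⁿ⁻¹(21) = Bₙ Bₙ₋₁` and `φⁿ⁻¹(2) = Bₙ`,
the difference `P_{φⁿ⁻¹(21)} - P_{φⁿ⁻¹(2)}` factors as `(X^{gₙ+1} - X - 1) ∏_{m<n-1} (X^{ℓₘ} - 1)`,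
which vanishes at `γₙ`.
-/

lemma phiW_append (u v : List ℕ) : phiW (u ++ v) = phiW u ++ phiW v :=
  List.flatMap_append

lemma phiW_iterate_append (n : ℕ) (u v : List ℕ) :
    phiW^[n] (u ++ v) = phiW^[n] u ++ phiW^[n] v := by
  induction n generalizing u v with
  | zero => rfl
  | succ k ih => simp only [Function.iterate_succ_apply, phiW_append, ih]

lemma P_append (u v : List ℕ) (x : ℝ) :
    P (u ++ v) x = (-x) ^ v.length * P u x + P v x - (-x) ^ v.length := by
  unfold P
  rw [List.length_append, Finset.sum_range_add]
  have left : ∀ i ∈ Finset.range u.length,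
      (((u ++ v).getD i 0 : ℕ) : ℝ) * (-x) ^ (u.length + v.length - 1 - i)
        = (-x) ^ v.length * ((u.getD i 0 : ℝ) * (-x) ^ (u.length - 1 - i)) := by
    intro i hi
    rw [Finset.mem_range] at hi
    rw [List.getD_append _ _ _ _ hi,
      show u.length + v.length - 1 - i = v.length + (u.length - 1 - i) by omega, pow_add]
    ring
  have right : ∀ i ∈ Finset.range v.length,
      (((u ++ v).getD (u.length + i) 0 : ℕ) : ℝ) *
          (-x) ^ (u.length + v.length - 1 - (u.length + i))
        = (v.getD i 0 : ℝ) * (-x) ^ (v.length - 1 - i) := by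
    intro i _
    rw [List.getD_append_right _ _ _ _ (Nat.le_add_right _ _), Nat.add_sub_cancel_left,
      show u.length + v.length - 1 - (u.length + i) = v.length - 1 - i by omega]
  rw [Finset.sum_congr rfl left, Finset.sum_congr rfl right, ← Finset.mul_sum, pow_add]
  ring

def block (n : ℕ) : List ℕ := phiW^[n] [1]

lemma phiW_iterate_two (n : ℕ) : phiW^[n] [2] = block (n + 1) := by
  rw [block, Function.iterate_succ_apply]
  rfl

lemma block_add_two (n : ℕ) : block (n + 2) = block (n + 1) ++ block n ++ block n := by
  rw [← phiW_iterate_two, Function.iterate_succ_apply,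
    show phiW [2] = [2] ++ [1] ++ [1] from rfl, phiW_iterate_append, phiW_iterate_append,
    phiW_iterate_two]
  rfl

lemma three_mul_length_block (n : ℕ) :
    3 * (block n).length + n % 2 = 2 ^ (n + 1) + (n + 1) % 2 := by
  induction n using Nat.twoStepInduction with
  | zero => rfl
  | one => rfl
  | more k ih₀ ih₁ =>
    rw [block_add_two, List.length_append, List.length_append,
      show 2 ^ (k + 2 + 1) = 2 * 2 ^ (k + 1 + 1) by ring]
    omega

lemma odd_length_block (n : ℕ) : Odd (block n).length := by
  have h := three_mul_length_block n
  rw [pow_succ] at h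
  rw [Nat.odd_iff]
  omega

lemma two_mul_length_block (n : ℕ) : 2 * (block n).length + n % 2 = g (n + 1) + 1 := by
  have h := three_mul_length_block n
  rw [g, pow_succ 2 (n + 1)]
  omega

lemma P_block (n : ℕ) (x : ℝ) :
    P (block n) x = 1 - x ^ ((n + 1) % 2) *
      ∏ m ∈ Finset.range n, (x ^ (block m).length - 1) := by
  induction n using Nat.twoStepInduction with
  | zero => simp [block, P, neg_add_eq_sub]
  | one => simp [block, phiW, phi, P]; ring
  | more k ih₀ ih₁ =>
    have hneg : (-x) ^ (block k).length = -x ^ (block k).length :=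
      (odd_length_block k).neg_pow x
    have hexp : x ^ ((k + 1) % 2) * x ^ (block (k + 1)).length
        = x ^ (block k).length * x ^ (block k).length * x ^ ((k + 1 + 1) % 2) := by
      simp only [← pow_add]
      congr 1
      have h₀ := three_mul_length_block k
      have h₁ := three_mul_length_block (k + 1)
      rw [pow_succ 2 (k + 1)] at h₁
      omega
    rw [block_add_two, P_append, P_append, ih₀, ih₁, hneg,
      show (k + 2 + 1) % 2 = (k + 1) % 2 by omega,
      Finset.prod_range_succ _ (k + 1), Finset.prod_range_succ _ k]
    linear_combination
      (∏ m ∈ Finset.range k, (x ^ (block m).length - 1)) * (x ^ (block k).length - 1) * hexp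

lemma P_phiW_iterate_sub (n : ℕ) (x : ℝ) :
    P (phiW^[n] [2, 1]) x - P (phiW^[n] [2]) x =
      (x ^ (g (n + 1) + 1) - x - 1) * ∏ m ∈ Finset.range n, (x ^ (block m).length - 1) := by
  have hsplit : phiW^[n] [2, 1] = block (n + 1) ++ block n := by
    rw [show ([2, 1] : List ℕ) = [2] ++ [1] from rfl, phiW_iterate_append, phiW_iterate_two]
    rfl
  have hneg : (-x) ^ (block n).length = -x ^ (block n).length :=
    (odd_length_block n).neg_pow x
  have hexp : x ^ ((n + 2) % 2) * (x ^ (block n).length * x ^ (block n).length)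
      = x ^ (g (n + 1) + 1) := by
    simp only [← pow_add]
    congr 1
    have := two_mul_length_block n
    omega
  have hparity : x ^ ((n + 2) % 2) + x ^ ((n + 1) % 2) = x + 1 := by
    rcases Nat.mod_two_eq_zero_or_one n with h | h <;>
      simp [Nat.add_mod, h, add_comm]
  rw [hsplit, phiW_iterate_two, P_append, P_block (n + 1), P_block n, hneg,
    Finset.prod_range_succ _ n]
  linear_combination (∏ m ∈ Finset.range n, (x ^ (block m).length - 1)) * (hexp - hparity)

theorem P_eq_at_gamma_general (n : ℕ) (hn : 1 ≤ n) (β : ℝ)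
    (hγ : β ^ (g n + 1) = β + 1) :
    P (phiW^[n - 1] [2, 1]) β = P (phiW^[n - 1] [2]) β := by
  obtain ⟨m, rfl⟩ : ∃ m, n = m + 1 := ⟨n - 1, (Nat.sub_add_cancel hn).symm⟩
  rw [Nat.add_sub_cancel, ← sub_eq_zero, P_phiW_iterate_sub, hγ]
  ring

theorem P_eq_at_gamma (n : ℕ) (hn : 1 ≤ n) (β : ℝ) (hβ : 1 < β)
    (hγ : β ^ (g n + 1) = β + 1) :
    P (phiW^[n - 1] [2, 1]) β = P (phiW^[n - 1] [2]) β :=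
  P_eq_at_gamma_general n hn β hγ
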